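/- Consider the type T of closed terms over the signature with constants c, d and a unary operation u, and the deterministic higher-order transition system γ : T → T ⊕ (T → T) given by: γ(c) = inr (fun x => c); γ(d) = inl c; γ(u t) = inl (u t') if γ(t) = inl t'; γ(u t) = inl c if γ(t) = inr f. Then c is weakly similar to d, but u c is not weakly similar to u d; hence weak similarity on this system is not a congruence. -/
import Mathlib


/-- Terms over the signature with constants `c`, `d` and a unary operation `u`. -/
inductive Tm : Type
  | c : Tm
  | d : Tm
  | u : Tm → Tm

/-- The operational model: `γ(c) = inr (fun _ => c)`, `γ(d) = inl c`,
`u t` reduces to itself while `t` reduces, and `γ(u t) = inl c` once `t` acts as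
a function. -/
def gam : Tm → Tm ⊕ (Tm → Tm)
  | Tm.c => Sum.inr (fun _ => Tm.c)
  | Tm.d => Sum.inl Tm.c
  | Tm.u t =>
    match gam t with
    | Sum.inl _ => Sum.inl (Tm.u t)
    | Sum.inr _ => Sum.inl Tm.c

def Step (p q : Tm) : Prop := gam p = Sum.inl q

def WStep : Tm → Tm → Prop := Relation.ReflTransGen Step

def Conv (p : Tm) (f : Tm → Tm) : Prop :=
  ∃ p', WStep p p' ∧ gam p' = Sum.inr f

def IsWeakSim (R : Tm → Tm → Prop) : Prop :=
  ∀ p q, R p q →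
    (∀ p', WStep p p' → ∃ q', WStep q q' ∧ R p' q') ∧
    (∀ f, Conv p f → ∃ g, Conv q g ∧ ∀ x, R (f x) (g x))

/-- Weak similarity: the union of all weak simulations. -/
def WSim (p q : Tm) : Prop := ∃ R, IsWeakSim R ∧ R p q

lemma gam_ud : gam (Tm.u Tm.d) = Sum.inl (Tm.u Tm.d) := rfl

lemma wstep_ud (p : Tm) (h : WStep (Tm.u Tm.d) p) : p = Tm.u Tm.d := by
  induction h with
  | refl => rfl
  | tail _ hs ih =>
    subst ih
    have : Sum.inl (Tm.u Tm.d) = Sum.inl (α := Tm) (β := Tm → Tm) _ := hs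
    exact (Sum.inl.injEq _ _ ▸ this).symm

lemma wstep_c (p : Tm) (h : WStep Tm.c p) : p = Tm.c := by
  induction h with
  | refl => rfl
  | tail _ hs ih =>
    subst ih
    exact absurd hs (by simp [Step, gam])

/-- the simulation {(c,d),(c,c)} -/
def Rcd (p q : Tm) : Prop := p = Tm.c ∧ (q = Tm.d ∨ q = Tm.c)

lemma Rcd_sim : IsWeakSim Rcd := by
  intro p q ⟨hp, hq⟩
  subst hp
  constructor
  · intro p' hp'
    exact ⟨q, Relation.ReflTransGen.refl, (wstep_c _ hp'), hq⟩
  · intro f ⟨p', hp', hg⟩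
    have := wstep_c _ hp'
    subst this
    have hf : f = fun _ => Tm.c := by
      have : Sum.inr (α := Tm) (fun _ => Tm.c) = Sum.inr f := hg
      exact (Sum.inr.injEq _ _ ▸ this).symm
    subst hf
    refine ⟨fun _ => Tm.c, ?_, fun x => ⟨rfl, Or.inr rfl⟩⟩
    rcases hq with h | h <;> subst h
    · exact ⟨Tm.c, Relation.ReflTransGen.single rfl, rfl⟩
    · exact ⟨Tm.c, Relation.ReflTransGen.refl, rfl⟩

/-- `c ≲ d`, but `u c ⋠ u d`; hence weak similarity is not a congruence. -/
theorem wsim_not_congruence :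
    WSim Tm.c Tm.d ∧ ¬ WSim (Tm.u Tm.c) (Tm.u Tm.d) ∧
      ¬ (∀ s t, WSim s t → WSim (Tm.u s) (Tm.u t)) := by
  have h1 : WSim Tm.c Tm.d := ⟨Rcd, Rcd_sim, rfl, Or.inl rfl⟩
  have h2 : ¬ WSim (Tm.u Tm.c) (Tm.u Tm.d) := by
    rintro ⟨R, hR, hRcd⟩
    have hconv : Conv (Tm.u Tm.c) (fun _ => Tm.c) :=
      ⟨Tm.c, Relation.ReflTransGen.single rfl, rfl⟩
    obtain ⟨g, ⟨q', hq', hg⟩, _⟩ := (hR _ _ hRcd).2 _ hconv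
    have := wstep_ud _ hq'
    subst this
    exact absurd (gam_ud.symm.trans hg) (by simp)
  exact ⟨h1, h2, fun h => h2 (h _ _ h1)⟩
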